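/- Let Y be integrable, D ∈ {0,1}, Z discrete, X a random variable; let μ(d,z,x) = E[Y | D=d, Z=z, X=x] and p(d,z|X) = P(D=d,Z=z|X) ∈ (ε, 1−ε) a.s. Define for bounded perturbations (h_μ, h_p) the map G(t) = E[ (μ + t h_μ)(d,z,X) + (1{D=d,Z=z}/(p + t h_p)(X)) · (Y − (μ + t h_μ)(d,z,X)) ]. Then G is differentiable at t = 0 and G′(0) = 0. -/

import Mathlib

/-!
For small `|t|` the perturbed propensity `p + t h_p` stays above `ε / 2`, so the `t`-derivative
of the score is dominated by an integrable function of `Y` and `μ`, and we may differentiate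
under the integral. With `I = 1{D=d, Z=z}`, the derivative at `t = 0` is
`h_μ (1 - I / p) - (h_p / p²) I (Y - μ)`. Both terms integrate to zero by the tower property
over `σ(X)`: the weights `h_μ / p` and `h_p / p²` are `X`-measurable, `E[I | X] = p`, and
`E[I (Y - μ) | X] = E[Y I | X] - μ p = 0` by the definition of `μ`.
-/

open MeasureTheory ProbabilityTheory Set Filter

/-- The AIPW score at an observation `(y, c)`, with `c` in the role of `1{D = d, Z = z}`,
for outcome regression value `m` and propensity value `p`. -/
noncomputable def aipwScore (y c m p : ℝ) : ℝ := m + c / p * (y - m)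

section Scalar

variable {y c m b p r : ℝ}

lemma hasDerivAt_aipwScore_line {t : ℝ} (hv : p + t * r ≠ 0) :
    HasDerivAt (fun s => aipwScore y c (m + s * b) (p + s * r))
      (b * (1 - c / (p + t * r)) - c * r * (y - (m + t * b)) / (p + t * r) ^ 2) t := by
  have hm : HasDerivAt (fun s => m + s * b) b t := (hasDerivAt_mul_const b).const_add m
  have hp : HasDerivAt (fun s => p + s * r) r t := (hasDerivAt_mul_const r).const_add p
  refine (hm.add (((hasDerivAt_const t c).div hp hv).mul
    ((hasDerivAt_const t y).sub hm))).congr_deriv ?_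
  simp only [Pi.div_apply, Pi.sub_apply]
  field_simp
  ring

lemma abs_aipwScore_line_deriv_le {t ε Cb Cr : ℝ} (hε : 0 < ε) (hv : ε ≤ p + t * r)
    (hc : |c| ≤ 1) (hb : |b| ≤ Cb) (hr : |r| ≤ Cr) (ht : |t| ≤ 1) :
    |b * (1 - c / (p + t * r)) - c * r * (y - (m + t * b)) / (p + t * r) ^ 2|
      ≤ Cb * (1 + 1 / ε) + Cr * (|y| + |m| + Cb) / ε ^ 2 := by
  set v := p + t * r
  have hv0 : 0 < v := hε.trans_le hv
  have hc_div : |1 - c / v| ≤ 1 + 1 / ε := by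
    calc |1 - c / v| ≤ 1 + |c| / v := by
          simpa [abs_div, abs_of_pos hv0] using abs_sub (1 : ℝ) (c / v)
      _ ≤ 1 + 1 / ε := by gcongr
  have hres : |y - (m + t * b)| ≤ |y| + |m| + Cb := by
    have htb : |t * b| ≤ Cb := by
      rw [abs_mul]; nlinarith [abs_nonneg t, abs_nonneg b]
    calc |y - (m + t * b)| ≤ |y| + |m + t * b| := abs_sub _ _
      _ ≤ |y| + (|m| + |t * b|) := by gcongr; exact abs_add_le _ _
      _ ≤ |y| + |m| + Cb := by linarith
  calc |b * (1 - c / v) - c * r * (y - (m + t * b)) / v ^ 2|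
      ≤ |b * (1 - c / v)| + |c * r * (y - (m + t * b)) / v ^ 2| := abs_sub _ _
    _ = |b| * |1 - c / v| + |c| * |r| * |y - (m + t * b)| / v ^ 2 := by
        rw [abs_mul, abs_div, abs_mul, abs_mul, abs_of_pos (pow_pos hv0 2)]
    _ ≤ Cb * (1 + 1 / ε) + 1 * Cr * (|y| + |m| + Cb) / ε ^ 2 := by
        have := (abs_nonneg r).trans hr
        have := (abs_nonneg b).trans hb
        gcongr
    _ = Cb * (1 + 1 / ε) + Cr * (|y| + |m| + Cb) / ε ^ 2 := by ring

lemma half_lt_add_mul {ε C t : ℝ} (hp : ε < p) (hr : |r| ≤ C)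
    (ht : |t| * (|C| + 1) ≤ ε / 2) : ε / 2 < p + t * r := by
  have htr : |t * r| ≤ ε / 2 := by
    rw [abs_mul]
    calc |t| * |r| ≤ |t| * (|C| + 1) := by gcongr; linarith [le_abs_self C]
      _ ≤ ε / 2 := ht
  linarith [neg_abs_le (t * r)]

end Scalar

section CondExp

variable {Ω : Type*} {m m₀ : MeasurableSpace Ω} {P : Measure Ω}

lemma integral_mul_eq_integral_mul_condExp (hm : m ≤ m₀) [SigmaFinite (P.trim hm)]
    {f w : Ω → ℝ} (hw : AEStronglyMeasurable[m] w P) (hwf : Integrable (w * f) P)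
    (hf : Integrable f P) :
    ∫ ω, w ω * f ω ∂P = ∫ ω, w ω * P[f | m] ω ∂P :=
  calc ∫ ω, w ω * f ω ∂P = ∫ ω, P[w * f | m] ω ∂P := (integral_condExp hm).symm
    _ = ∫ ω, w ω * P[f | m] ω ∂P :=
      integral_congr_ae (condExp_mul_of_aestronglyMeasurable_left hw hwf hf)

variable [IsFiniteMeasure P] {Y I g w : Ω → ℝ} {C : ℝ}

lemma integral_mul_mul_sub_regression_eq_zero (hm : m ≤ m₀) (hY : Integrable Y P)
    (hI : AEStronglyMeasurable I P) (hI1 : ∀ᵐ ω ∂P, ‖I ω‖ ≤ 1)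
    (hg : AEStronglyMeasurable[m] g P) (hgi : Integrable g P)
    (hgI : g * P[I | m] =ᵐ[P] P[fun ω => Y ω * I ω | m])
    (hw : AEStronglyMeasurable[m] w P) (hwb : ∀ᵐ ω ∂P, ‖w ω‖ ≤ C) :
    ∫ ω, w ω * (I ω * (Y ω - g ω)) ∂P = 0 := by
  have : IsFiniteMeasure (P.trim hm) := isFiniteMeasure_trim hm
  have hIi : Integrable I P := .of_bound hI 1 hI1
  have hYI : Integrable (fun ω => Y ω * I ω) P := hY.mul_bdd hI hI1
  have hwg : AEStronglyMeasurable[m] (w * g) P := hw.mul hg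
  have hwgI : Integrable (fun ω => (w * g) ω * I ω) P :=
    (hgi.bdd_mul (hw.mono hm) hwb).mul_bdd hI hI1
  have hwYI : Integrable (fun ω => w ω * (Y ω * I ω)) P := hYI.bdd_mul (hw.mono hm) hwb
  have hYI_eq : ∫ ω, w ω * (Y ω * I ω) ∂P = ∫ ω, (w * g) ω * I ω ∂P := by
    rw [integral_mul_eq_integral_mul_condExp hm hw hwYI hYI,
      integral_mul_eq_integral_mul_condExp hm hwg hwgI hIi]
    refine integral_congr_ae ?_
    filter_upwards [hgI] with ω hω
    simp only [Pi.mul_apply] at hω ⊢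
    rw [← hω, mul_assoc]
  calc ∫ ω, w ω * (I ω * (Y ω - g ω)) ∂P
      = ∫ ω, w ω * (Y ω * I ω) - (w * g) ω * I ω ∂P := by
        congr 1; ext ω; simp only [Pi.mul_apply]; ring
    _ = 0 := by rw [integral_sub hwYI hwgI, hYI_eq, sub_self]

variable {e u v : Ω → ℝ} {ε Cu Cv : ℝ}

lemma integral_aipwScore_deriv_eq_zero (hm : m ≤ m₀) (hε : 0 < ε)
    (hY : Integrable Y P) (hI : AEStronglyMeasurable I P) (hI1 : ∀ᵐ ω ∂P, ‖I ω‖ ≤ 1)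
    (he : e =ᵐ[P] P[I | m]) (heε : ∀ᵐ ω ∂P, ε < e ω)
    (hg : g =ᵐ[P] fun ω => P[fun ω' => Y ω' * I ω' | m] ω / e ω) (hgi : Integrable g P)
    (hu : AEStronglyMeasurable[m] u P) (hub : ∀ᵐ ω ∂P, ‖u ω‖ ≤ Cu)
    (hv : AEStronglyMeasurable[m] v P) (hvb : ∀ᵐ ω ∂P, ‖v ω‖ ≤ Cv) :
    ∫ ω, u ω * (1 - I ω / e ω) - I ω * v ω * (Y ω - g ω) / e ω ^ 2 ∂P = 0 := by
  have : IsFiniteMeasure (P.trim hm) := isFiniteMeasure_trim hm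
  have hem : AEStronglyMeasurable[m] e P := ⟨P[I | m], stronglyMeasurable_condExp, he⟩
  have hgm : AEStronglyMeasurable[m] g P :=
    (stronglyMeasurable_condExp.aestronglyMeasurable.div₀ hem).congr hg.symm
  have hgI : g * P[I | m] =ᵐ[P] P[fun ω => Y ω * I ω | m] := by
    filter_upwards [hg, he, heε] with ω hgω heω hεω
    have : e ω ≠ 0 := (hε.trans hεω).ne'
    simp only [Pi.mul_apply, hgω, ← heω]
    field_simp
  have hue : ∀ᵐ ω ∂P, ‖(u / e) ω‖ ≤ Cu / ε := by
    filter_upwards [hub, heε] with ω huω heω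
    rw [Pi.div_apply, norm_div, Real.norm_of_nonneg (hε.trans heω).le]
    exact div_le_div₀ ((norm_nonneg _).trans huω) huω hε heω.le
  have hve : ∀ᵐ ω ∂P, ‖(v / e ^ 2) ω‖ ≤ Cv / ε ^ 2 := by
    filter_upwards [hvb, heε] with ω hvω heω
    rw [Pi.div_apply, Pi.pow_apply, norm_div, norm_pow, Real.norm_of_nonneg (hε.trans heω).le]
    exact div_le_div₀ ((norm_nonneg _).trans hvω) hvω (by positivity)
      (pow_le_pow_left₀ hε.le heω.le 2)
  have hui : Integrable u P := .of_bound (hu.mono hm) Cu hub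
  have hueI : Integrable (fun ω => (u / e) ω * I ω) P :=
    (Integrable.of_bound hI 1 hI1).bdd_mul ((hu.div₀ hem).mono hm) hue
  have hres : Integrable (fun ω => (v / e ^ 2) ω * (I ω * (Y ω - g ω))) P :=
    ((hY.sub hgi).mul_bdd hI hI1 |>.congr (.of_forall fun ω => mul_comm _ _)).bdd_mul
      ((hv.div₀ (hem.pow 2)).mono hm) hve
  have hweight : ∫ ω, (u / e) ω * I ω ∂P = ∫ ω, u ω ∂P := by
    rw [integral_mul_eq_integral_mul_condExp hm (hu.div₀ hem) hueI (.of_bound hI 1 hI1)]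
    refine integral_congr_ae ?_
    filter_upwards [he, heε] with ω heω hεω
    have : e ω ≠ 0 := (hε.trans hεω).ne'
    simp only [Pi.div_apply, ← heω]
    field_simp
  calc ∫ ω, u ω * (1 - I ω / e ω) - I ω * v ω * (Y ω - g ω) / e ω ^ 2 ∂P
      = ∫ ω, (u ω - (u / e) ω * I ω) - (v / e ^ 2) ω * (I ω * (Y ω - g ω)) ∂P := by
        congr 1; ext ω; simp only [Pi.div_apply, Pi.pow_apply]; ring
    _ = 0 := by
        have hdiff : Integrable (fun ω => u ω - (u / e) ω * I ω) P := hui.sub hueI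
        rw [integral_sub hdiff hres, integral_sub hui hueI, hweight,
          integral_mul_mul_sub_regression_eq_zero hm hY hI hI1 hgm hgi hgI
            (hv.div₀ (hem.pow 2)) hve]
        simp

end CondExp

section Differentiation

variable {Ω : Type*} [MeasurableSpace Ω] {P : Measure Ω} [IsFiniteMeasure P]
  {Y I g e u v : Ω → ℝ} {ε Cu Cv : ℝ}

theorem hasDerivAt_integral_aipwScore_line (hε : 0 < ε)
    (hY : Integrable Y P) (hI : AEStronglyMeasurable I P) (hI1 : ∀ᵐ ω ∂P, ‖I ω‖ ≤ 1)
    (he : AEStronglyMeasurable e P) (heε : ∀ᵐ ω ∂P, ε < e ω) (hg : Integrable g P)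
    (hu : AEStronglyMeasurable u P) (hub : ∀ᵐ ω ∂P, ‖u ω‖ ≤ Cu)
    (hv : AEStronglyMeasurable v P) (hvb : ∀ᵐ ω ∂P, ‖v ω‖ ≤ Cv) :
    HasDerivAt (fun t => ∫ ω, aipwScore (Y ω) (I ω) (g ω + t * u ω) (e ω + t * v ω) ∂P)
      (∫ ω, u ω * (1 - I ω / e ω) - I ω * v ω * (Y ω - g ω) / e ω ^ 2 ∂P) 0 := by
  have hY' := hY.aemeasurable
  have hg' := hg.aemeasurable
  have hI' := hI.aemeasurable
  have he' := he.aemeasurable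
  have hu' := hu.aemeasurable
  have hv' := hv.aemeasurable
  set δ := min 1 (ε / 2 / (|Cv| + 1))
  have hδ : 0 < δ := lt_min one_pos (by positivity)
  have hball : ∀ t ∈ Metric.ball (0 : ℝ) δ, |t| ≤ 1 ∧ |t| * (|Cv| + 1) ≤ ε / 2 := by
    intro t ht
    rw [Metric.mem_ball, dist_zero_right, Real.norm_eq_abs] at ht
    exact ⟨ht.le.trans (min_le_left _ _),
      (le_div_iff₀ (by positivity)).1 (ht.le.trans (min_le_right _ _))⟩
  have hF_meas : ∀ t : ℝ, AEStronglyMeasurable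
      (fun ω => aipwScore (Y ω) (I ω) (g ω + t * u ω) (e ω + t * v ω)) P := by
    intro t
    unfold aipwScore
    exact AEMeasurable.aestronglyMeasurable (by fun_prop)
  have hF_int :
      Integrable (fun ω => aipwScore (Y ω) (I ω) (g ω + 0 * u ω) (e ω + 0 * v ω)) P := by
    simp only [zero_mul, add_zero, aipwScore]
    refine hg.add ((hY.sub hg).bdd_mul (c := 1 / ε) (hI.div₀ he) ?_)
    filter_upwards [hI1, heε] with ω hIω heω
    rw [norm_div, Real.norm_of_nonneg (hε.trans heω).le]
    exact div_le_div₀ zero_le_one hIω hε heω.le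
  have hF'_meas : AEStronglyMeasurable (fun ω => u ω * (1 - I ω / (e ω + 0 * v ω))
      - I ω * v ω * (Y ω - (g ω + 0 * u ω)) / (e ω + 0 * v ω) ^ 2) P :=
    AEMeasurable.aestronglyMeasurable (by fun_prop)
  have h_bound : ∀ᵐ ω ∂P, ∀ t ∈ Metric.ball (0 : ℝ) δ,
      ‖u ω * (1 - I ω / (e ω + t * v ω))
          - I ω * v ω * (Y ω - (g ω + t * u ω)) / (e ω + t * v ω) ^ 2‖
        ≤ Cu * (1 + 1 / (ε / 2)) + Cv * (|Y ω| + |g ω| + Cu) / (ε / 2) ^ 2 := by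
    filter_upwards [hI1, hub, hvb, heε] with ω hIω huω hvω heω t ht
    exact abs_aipwScore_line_deriv_le (by positivity)
      (half_lt_add_mul heω hvω (hball t ht).2).le hIω huω hvω (hball t ht).1
  have h_bound_int : Integrable
      (fun ω => Cu * (1 + 1 / (ε / 2)) + Cv * (|Y ω| + |g ω| + Cu) / (ε / 2) ^ 2) P :=
    (integrable_const _).add
      ((((hY.abs.add hg.abs).add (integrable_const _)).const_mul Cv).div_const _)
  have h_diff : ∀ᵐ ω ∂P, ∀ t ∈ Metric.ball (0 : ℝ) δ,
      HasDerivAt (fun s => aipwScore (Y ω) (I ω) (g ω + s * u ω) (e ω + s * v ω))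
        (u ω * (1 - I ω / (e ω + t * v ω))
          - I ω * v ω * (Y ω - (g ω + t * u ω)) / (e ω + t * v ω) ^ 2) t := by
    filter_upwards [hvb, heε] with ω hvω heω t ht
    exact hasDerivAt_aipwScore_line
      ((half_lt_add_mul heω hvω (hball t ht).2).trans' (by positivity)).ne'
  have := (hasDerivAt_integral_of_dominated_loc_of_deriv_le (Metric.ball_mem_nhds 0 hδ)
    (.of_forall hF_meas) hF_int hF'_meas h_bound h_bound_int h_diff).2
  simpa only [zero_mul, add_zero] using this

end Differentiation

theorem stmt_6_general {Ω : Type*} [MeasurableSpace Ω] (P : Measure Ω) [IsProbabilityMeasure P]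
    (Y : Ω → ℝ) (D : Ω → ℕ) (Z : Ω → ℤ) (X : Ω → ℝ) (d : ℕ) (z : ℤ)
    (hD : Measurable D) (hZ : Measurable Z) (hX : Measurable X)
    (hYint : Integrable Y P)
    -- the true propensity score p(d,z | X), bounded away from 0 and 1
    (ps : Ω → ℝ) (ε : ℝ) (hε : 0 < ε)
    (hps : ps =ᵐ[P] P[({ω' | D ω' = d ∧ Z ω' = z}).indicator (fun _ => (1 : ℝ))
            | MeasurableSpace.comap X inferInstance])
    (hpsbd : ∀ᵐ ω ∂P, ε < ps ω ∧ ps ω < 1 - ε)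
    -- the true conditional mean outcome μ(d,z,X) = E[Y | D = d, Z = z, X]
    (μfn : Ω → ℝ)
    (hμ : μfn =ᵐ[P] fun ω =>
      (P[fun ω' => Y ω' * ({ω'' | D ω'' = d ∧ Z ω'' = z}).indicator (fun _ => (1 : ℝ)) ω'
          | MeasurableSpace.comap X inferInstance]) ω / ps ω)
    (hμint : Integrable μfn P)
    -- bounded measurable perturbations of the nuisance functions (functions of X)
    (hμf hpf : Ω → ℝ)
    (hμfMeas : Measurable[MeasurableSpace.comap X inferInstance] hμf)
    (hpfMeas : Measurable[MeasurableSpace.comap X inferInstance] hpf)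
    (Cμ Cp : ℝ) (hμfbd : ∀ ω, |hμf ω| ≤ Cμ) (hpfbd : ∀ ω, |hpf ω| ≤ Cp) :
    HasDerivAt
      (fun t : ℝ =>
        ∫ ω, (μfn ω + t * hμf ω)
            + (({ω' | D ω' = d ∧ Z ω' = z}).indicator (fun _ => (1 : ℝ)) ω
                / (ps ω + t * hpf ω))
              * (Y ω - (μfn ω + t * hμf ω)) ∂P)
      0 0 := by
  have hm := hX.comap_le
  have hI : Measurable (({ω' | D ω' = d ∧ Z ω' = z}).indicator (fun _ => (1 : ℝ))) :=
    measurable_const.indicator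
      ((hD (measurableSet_singleton d)).inter (hZ (measurableSet_singleton z)))
  have hI1 : ∀ᵐ ω ∂P, ‖({ω' | D ω' = d ∧ Z ω' = z}).indicator (fun _ => (1 : ℝ)) ω‖ ≤ 1 :=
    ae_of_all _ fun ω => (norm_indicator_le_norm_self _ ω).trans norm_one.le
  have hps_meas : AEStronglyMeasurable ps P :=
    (stronglyMeasurable_condExp.mono hm).aestronglyMeasurable.congr hps.symm
  have hμf_meas := hμfMeas.stronglyMeasurable.aestronglyMeasurable (μ := P)
  have hpf_meas := hpfMeas.stronglyMeasurable.aestronglyMeasurable (μ := P)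
  have hderiv := hasDerivAt_integral_aipwScore_line hε hYint hI.aestronglyMeasurable hI1
    hps_meas (hpsbd.mono fun _ h => h.1) hμint (hμf_meas.mono hm) (ae_of_all _ hμfbd)
    (hpf_meas.mono hm) (ae_of_all _ hpfbd)
  rwa [integral_aipwScore_deriv_eq_zero hm hε hYint hI.aestronglyMeasurable hI1 hps
    (hpsbd.mono fun _ h => h.1) hμ hμint hμf_meas (ae_of_all _ hμfbd) hpf_meas
    (ae_of_all _ hpfbd)] at hderiv

/-- Neyman orthogonality of the doubly robust (AIPW) score: the Gateaux derivative of the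
AIPW functional with respect to joint perturbations of the outcome regression and the
propensity score vanishes at the true nuisance parameters. -/
theorem stmt_6 {Ω : Type*} [MeasurableSpace Ω] (P : Measure Ω) [IsProbabilityMeasure P]
    (Y : Ω → ℝ) (D : Ω → ℕ) (Z : Ω → ℤ) (X : Ω → ℝ) (d : ℕ) (z : ℤ)
    (hD : Measurable D) (hZ : Measurable Z) (hX : Measurable X)
    (hDbin : ∀ ω, D ω = 0 ∨ D ω = 1)
    (hYint : Integrable Y P)
    -- the true propensity score p(d,z | X), bounded away from 0 and 1
    (ps : Ω → ℝ) (ε : ℝ) (hε : 0 < ε)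
    (hps : ps =ᵐ[P] P[({ω' | D ω' = d ∧ Z ω' = z}).indicator (fun _ => (1 : ℝ))
            | MeasurableSpace.comap X inferInstance])
    (hpsbd : ∀ᵐ ω ∂P, ε < ps ω ∧ ps ω < 1 - ε)
    -- the true conditional mean outcome μ(d,z,X) = E[Y | D = d, Z = z, X]
    (μfn : Ω → ℝ)
    (hμ : μfn =ᵐ[P] fun ω =>
      (P[fun ω' => Y ω' * ({ω'' | D ω'' = d ∧ Z ω'' = z}).indicator (fun _ => (1 : ℝ)) ω'
          | MeasurableSpace.comap X inferInstance]) ω / ps ω)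
    (hμint : Integrable μfn P)
    -- bounded measurable perturbations of the nuisance functions (functions of X)
    (hμf hpf : Ω → ℝ)
    (hμfMeas : Measurable[MeasurableSpace.comap X inferInstance] hμf)
    (hpfMeas : Measurable[MeasurableSpace.comap X inferInstance] hpf)
    (Cμ Cp : ℝ) (hμfbd : ∀ ω, |hμf ω| ≤ Cμ) (hpfbd : ∀ ω, |hpf ω| ≤ Cp) :
    HasDerivAt
      (fun t : ℝ =>
        ∫ ω, (μfn ω + t * hμf ω)
            + (({ω' | D ω' = d ∧ Z ω' = z}).indicator (fun _ => (1 : ℝ)) ω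
                / (ps ω + t * hpf ω))
              * (Y ω - (μfn ω + t * hμf ω)) ∂P)
      0 0 :=
  stmt_6_general P Y D Z X d z hD hZ hX hYint ps ε hε hps hpsbd μfn hμ hμint hμf hpf hμfMeas hpfMeas
    Cμ Cp hμfbd hpfbd
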